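/- arXiv:1802.06885 — 2 statements merged into one kernel-verified Lean document; each statement's English description precedes it below -/
import Mathlib

section
/- Let f : ℝⁿ → ℝ be of class C² in a neighborhood of x̄ with all coordinates positive, suppose p̄ᵢ + λ̄·∂f/∂xᵢ(x̄) = 0 for all i with p̄ having all positive coordinates, f(x̄) = ȳ, and the determinant of the bordered Hessian of f at x̄ is nonzero. Let φ = (λ(·,·), x(·,·)) : V → W be a C¹ map on a neighborhood V of (p̄, ȳ) such that for (p,y) ∈ V, φ(p,y) is the unique point (λ, x) in W satisfying pᵢ + λ·fᵢ(x) = 0 for all i and f(x) = y, and define the cost function C(p, y) = Σᵢ pᵢ·xᵢ(p, y). Then for all i, j = 1,…,n, the Allen elasticity of substitution satisfies σ^A_{ij}(x̄) = C(p̄, ȳ)·∂²C/∂pᵢ∂p_j(p̄, ȳ) / (∂C/∂pᵢ(p̄, ȳ) · ∂C/∂p_j(p̄, ȳ)) (Uzawa's form), provided ∂C/∂pᵢ(p̄, ȳ) and ∂C/∂p_j(p̄, ȳ) are nonzero. -/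
/-- Partial derivative of `f : ℝⁿ → ℝ` with respect to the `i`-th variable. -/
noncomputable def pderiv1 (n : ℕ) (f : (Fin n → ℝ) → ℝ) (i : Fin n) (x : Fin n → ℝ) : ℝ :=
  fderiv ℝ f x (Pi.single i 1)

/-- Second partial derivative `f_{ij}` of `f : ℝⁿ → ℝ`. -/
noncomputable def pderiv2 (n : ℕ) (f : (Fin n → ℝ) → ℝ) (i j : Fin n) (x : Fin n → ℝ) : ℝ :=
  pderiv1 n (pderiv1 n f j) i x

/-- The bordered Hessian of `f` at `x`: the `(n+1) × (n+1)` matrix with `(0,0)` entry `0`,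
the rest of row 0 and column 0 given by the gradient of `f`, and lower-right `n × n`
block the Hessian of `f`. -/
noncomputable def borderedHessian (n : ℕ) (f : (Fin n → ℝ) → ℝ) (x : Fin n → ℝ) :
    Matrix (Fin (n + 1)) (Fin (n + 1)) ℝ :=
  Matrix.of fun i j =>
    Fin.cases
      (Fin.cases (0 : ℝ) (fun j' => pderiv1 n f j' x) j)
      (fun i' => Fin.cases (pderiv1 n f i' x) (fun j' => pderiv2 n f i' j' x) j) i

/-- The cofactor of the `(i,j)` entry of an `(m+1) × (m+1)` real matrix. -/
noncomputable def cofactor {m : ℕ} (M : Matrix (Fin (m + 1)) (Fin (m + 1)) ℝ)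
    (i j : Fin (m + 1)) : ℝ :=
  (-1 : ℝ) ^ ((i : ℕ) + (j : ℕ)) * (M.submatrix i.succAbove j.succAbove).det

/-- The Allen elasticity of substitution of factors `i` and `j` at `x`. -/
noncomputable def AES (n : ℕ) (f : (Fin n → ℝ) → ℝ) (x : Fin n → ℝ) (i j : Fin n) : ℝ :=
  ((∑ k, x k * pderiv1 n f k x) / (x i * x j)) *
    (cofactor (borderedHessian n f x) i.succ j.succ / (borderedHessian n f x).det)

open Filter

open Topology Matrix

/-! Differentiating the first-order conditions `p + λ ∇f(x) = 0`, `f(x) = y` along the solution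
map gives two facts. First, the envelope argument `∑ pₖ ∂xₖ = -λ ∇f · ∂x = -λ ∂y = 0` yields
Shephard's lemma `∂C/∂pᵢ = xᵢ(p, y)` near `(p̄, ȳ)`, hence `∂²C/∂pᵢ∂pⱼ = ∂xᵢ/∂pⱼ` and
`∂C/∂pᵢ = x̄ᵢ`. Second, the vector `(∂λ/∂pⱼ / λ̄, ∂x/∂pⱼ)` solves a linear system with the
bordered Hessian, so Cramer's rule gives `∂xᵢ/∂pⱼ = -Fᵢⱼ / (λ̄ F)`. Since moreover
`C(p̄, ȳ) = ∑ p̄ₖ x̄ₖ = -λ̄ ∑ x̄ₖ fₖ(x̄)`, both sides of Uzawa's formula agree. -/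

lemma fderiv_apply_eq_sum_pderiv1 {n : ℕ} (g : (Fin n → ℝ) → ℝ) (y u : Fin n → ℝ) :
    fderiv ℝ g y u = ∑ k, u k * pderiv1 n g k y := by
  conv_lhs => rw [pi_eq_sum_univ' u, map_sum]
  simp only [map_smul, smul_eq_mul, pderiv1]

lemma differentiableAt_pderiv1 {n : ℕ} {f : (Fin n → ℝ) → ℝ} {y : Fin n → ℝ}
    (hf : ContDiffAt ℝ 2 f y) (k : Fin n) : DifferentiableAt ℝ (pderiv1 n f k) y :=
  ((hf.fderiv_right le_rfl).clm_apply contDiffAt_const).differentiableAt one_ne_zero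

lemma adjugate_apply_eq_cofactor {m : ℕ} (A : Matrix (Fin (m + 1)) (Fin (m + 1)) ℝ)
    (a b : Fin (m + 1)) : A.adjugate a b = cofactor A b a := by
  rw [adjugate_apply, det_succ_row _ b, cofactor,
    Finset.sum_eq_single a (fun c _ hc => by simp [hc.symm]) (by simp)]
  simp

lemma det_mul_apply_of_vecMul_eq_single {m : ℕ} {A : Matrix (Fin (m + 1)) (Fin (m + 1)) ℝ}
    {v : Fin (m + 1) → ℝ} {c : Fin (m + 1)} {r : ℝ} (h : v ᵥ* A = Pi.single c r)
    (k : Fin (m + 1)) : A.det * v k = r * cofactor A k c := by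
  have hcramer : (v ᵥ* A) ᵥ* A.adjugate = A.det • v := by
    rw [vecMul_vecMul, mul_adjugate, vecMul_smul, vecMul_one]
  rw [h, single_vecMul] at hcramer
  simpa [adjugate_apply_eq_cofactor] using (congrFun hcramer k).symm

lemma vecMul_borderedHessian_zero {n : ℕ} (f : (Fin n → ℝ) → ℝ) (x : Fin n → ℝ) (c : ℝ)
    (b : Fin n → ℝ) : (Fin.cons c b ᵥ* borderedHessian n f x) 0 = fderiv ℝ f x b := by
  simp [vecMul, dotProduct, Fin.sum_univ_succ, borderedHessian, fderiv_apply_eq_sum_pderiv1]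

lemma vecMul_borderedHessian_succ {n : ℕ} (f : (Fin n → ℝ) → ℝ) (x : Fin n → ℝ) (c : ℝ)
    (b : Fin n → ℝ) (k : Fin n) :
    (Fin.cons c b ᵥ* borderedHessian n f x) k.succ =
      c * pderiv1 n f k x + fderiv ℝ (pderiv1 n f k) x b := by
  simp [vecMul, dotProduct, Fin.sum_univ_succ, borderedHessian, fderiv_apply_eq_sum_pderiv1,
    pderiv2]

section FirstOrderConditions

variable {n : ℕ} {f : (Fin n → ℝ) → ℝ} {x : (Fin n → ℝ) × ℝ → Fin n → ℝ}
  {l : (Fin n → ℝ) × ℝ → ℝ} {z : (Fin n → ℝ) × ℝ}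

lemma fderiv_apply_fderiv_eq_snd (hf : DifferentiableAt ℝ f (x z))
    (hx : DifferentiableAt ℝ x z) (hout : ∀ᶠ w in 𝓝 z, f (x w) = w.2)
    (v : (Fin n → ℝ) × ℝ) : fderiv ℝ f (x z) (fderiv ℝ x z v) = v.2 := by
  have h := EventuallyEq.fderiv_eq (𝕜 := ℝ) (f₁ := f ∘ x) (f := Prod.snd) hout
  rw [fderiv_comp z hf hx, fderiv_snd] at h
  exact congr($h v)

lemma fderiv_price_eq_zero {g : (Fin n → ℝ) → ℝ} {k : Fin n} (hl : DifferentiableAt ℝ l z)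
    (hx : DifferentiableAt ℝ x z) (hg : DifferentiableAt ℝ g (x z))
    (hprice : ∀ᶠ w in 𝓝 z, w.1 k + l w * g (x w) = 0) (v : (Fin n → ℝ) × ℝ) :
    v.1 k + fderiv ℝ l z v * g (x z) + l z * fderiv ℝ g (x z) (fderiv ℝ x z v) = 0 := by
  have hderiv := ((ContinuousLinearMap.proj k).comp
    (ContinuousLinearMap.fst ℝ _ ℝ)).hasFDerivAt.fun_add
      (hl.hasFDerivAt.fun_mul (hg.hasFDerivAt.comp z hx.hasFDerivAt))
  have hzero : HasFDerivAt (fun w => w.1 k + l w * g (x w)) (0 : _ →L[ℝ] ℝ) z :=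
    (hasFDerivAt_const 0 z).congr_of_eventuallyEq hprice
  have h := congr($(hderiv.unique hzero) v)
  simp at h
  linear_combination h

lemma fderiv_cost_apply (hx : DifferentiableAt ℝ x z) (v : (Fin n → ℝ) × ℝ) :
    fderiv ℝ (fun w => ∑ k, w.1 k * x w k) z v =
      ∑ k, (v.1 k * x z k + z.1 k * fderiv ℝ x z v k) := by
  have hderiv : HasFDerivAt (fun w => ∑ k, w.1 k * x w k) _ z :=
    HasFDerivAt.fun_sum (u := Finset.univ) fun k _ =>
      ((ContinuousLinearMap.proj k).comp (ContinuousLinearMap.fst ℝ _ ℝ)).hasFDerivAt.fun_mul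
        (hasFDerivAt_pi'.1 hx.hasFDerivAt k)
  rw [hderiv.fderiv, _root_.sum_apply]
  exact Finset.sum_congr rfl fun k _ => by simp [add_comm, mul_comm]

lemma fderiv_cost_apply_single (hx : DifferentiableAt ℝ x z)
    (hf : DifferentiableAt ℝ f (x z)) (hout : ∀ᶠ w in 𝓝 z, f (x w) = w.2) {μ : ℝ}
    (hprice : ∀ k, z.1 k + μ * pderiv1 n f k (x z) = 0) (i : Fin n) :
    fderiv ℝ (fun w => ∑ k, w.1 k * x w k) z (Pi.single i 1, 0) = x z i := by
  have henvelope : ∑ k, z.1 k * fderiv ℝ x z (Pi.single i 1, 0) k = 0 := by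
    have h := fderiv_apply_fderiv_eq_snd hf hx hout (Pi.single i 1, 0)
    rw [fderiv_apply_eq_sum_pderiv1] at h
    calc ∑ k, z.1 k * fderiv ℝ x z (Pi.single i 1, 0) k
        = -μ * ∑ k, fderiv ℝ x z (Pi.single i 1, 0) k * pderiv1 n f k (x z) := by
          rw [Finset.mul_sum]
          refine Finset.sum_congr rfl fun k _ => ?_
          linear_combination fderiv ℝ x z (Pi.single i 1, 0) k * hprice k
      _ = 0 := by rw [h, mul_zero]
  rw [fderiv_cost_apply hx, Finset.sum_add_distrib, henvelope, add_zero]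
  simp [Pi.single_apply]

/-- Read as a row-vector system, so that Cramer's rule produces the cofactor `F_{ij}` itself
and no symmetry of the Hessian is needed. -/
lemma vecMul_borderedHessian_fderiv (hl : DifferentiableAt ℝ l z)
    (hx : DifferentiableAt ℝ x z) (hf : DifferentiableAt ℝ f (x z))
    (hf' : ∀ k, DifferentiableAt ℝ (pderiv1 n f k) (x z))
    (hprice : ∀ᶠ w in 𝓝 z, ∀ k, w.1 k + l w * pderiv1 n f k (x w) = 0)
    (hout : ∀ᶠ w in 𝓝 z, f (x w) = w.2) (hl0 : l z ≠ 0) (j : Fin n) :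
    Fin.cons (fderiv ℝ l z (Pi.single j 1, 0) / l z) (fderiv ℝ x z (Pi.single j 1, 0)) ᵥ*
      borderedHessian n f (x z) = Pi.single j.succ (-(l z)⁻¹) := by
  funext m
  refine Fin.cases ?_ (fun k => ?_) m
  · rw [vecMul_borderedHessian_zero, fderiv_apply_fderiv_eq_snd hf hx hout,
      Pi.single_eq_of_ne (Fin.succ_ne_zero j).symm]
  · have h := fderiv_price_eq_zero hl hx (hf' k) (hprice.mono fun w hw => hw k)
      (Pi.single j 1, 0)
    rw [vecMul_borderedHessian_succ]
    rcases eq_or_ne k j with rfl | hkj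
    · simp only [Pi.single_eq_same] at h ⊢
      field_simp
      linear_combination h
    · simp only [Pi.single_eq_of_ne hkj, Pi.single_eq_of_ne ((Fin.succ_injective n).ne hkj)]
        at h ⊢
      field_simp
      linear_combination h

lemma fderiv_apply_eq_neg_cofactor_div (hl : DifferentiableAt ℝ l z)
    (hx : DifferentiableAt ℝ x z) (hf : ContDiffAt ℝ 2 f (x z))
    (hprice : ∀ᶠ w in 𝓝 z, ∀ k, w.1 k + l w * pderiv1 n f k (x w) = 0)
    (hout : ∀ᶠ w in 𝓝 z, f (x w) = w.2) (hl0 : l z ≠ 0)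
    (hF : (borderedHessian n f (x z)).det ≠ 0) (i j : Fin n) :
    fderiv ℝ x z (Pi.single j 1, 0) i =
      -cofactor (borderedHessian n f (x z)) i.succ j.succ /
        (l z * (borderedHessian n f (x z)).det) := by
  have hcramer := det_mul_apply_of_vecMul_eq_single
    (vecMul_borderedHessian_fderiv hl hx (hf.differentiableAt two_ne_zero)
      (differentiableAt_pderiv1 hf) hprice hout hl0 j) i.succ
  rw [Fin.cons_succ] at hcramer
  rw [eq_div_iff (mul_ne_zero hl0 hF)]
  field_simp at hcramer
  linear_combination hcramer

end FirstOrderConditions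

lemma eventually_fderiv_cost_apply_single {n : ℕ} {f : (Fin n → ℝ) → ℝ}
    {φ : (Fin n → ℝ) × ℝ → ℝ × (Fin n → ℝ)} {V : Set ((Fin n → ℝ) × ℝ)}
    {C : (Fin n → ℝ) × ℝ → ℝ} {z : (Fin n → ℝ) × ℝ} (hV : IsOpen V) (hφ : ContDiffOn ℝ 1 φ V)
    (hsys : ∀ w ∈ V, (∀ k, w.1 k + (φ w).1 * pderiv1 n f k (φ w).2 = 0) ∧ f (φ w).2 = w.2)
    (hC : ∀ w, C w = ∑ k, w.1 k * (φ w).2 k) (hz : z ∈ V)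
    (hf : ∀ᶠ y in 𝓝 (φ z).2, ContDiffAt ℝ 2 f y) :
    ∀ᶠ w in 𝓝 z, ∀ k, fderiv ℝ C w (Pi.single k 1, 0) = (φ w).2 k := by
  have hφdiff : ∀ w ∈ V, DifferentiableAt ℝ φ w := fun w hw =>
    (hφ.contDiffAt (hV.mem_nhds hw)).differentiableAt one_ne_zero
  filter_upwards [hV.eventually_mem hz, (hφdiff z hz).continuousAt.snd.tendsto.eventually hf]
    with w hw hfw k
  rw [show C = _ from funext hC]
  exact fderiv_cost_apply_single (hφdiff w hw).snd (hfw.differentiableAt two_ne_zero)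
    (eventually_of_mem (hV.mem_nhds hw) fun w' hw' => (hsys w' hw').2) (hsys w hw).1 k

theorem AES_uzawa_form_general (n : ℕ) (f : (Fin n → ℝ) → ℝ)
    (xbar pbar : Fin n → ℝ) (lbar ybar : ℝ)
    (hppos : ∀ i, 0 < pbar i)
    (hC2 : ∀ᶠ z in nhds xbar, ContDiffAt ℝ 2 f z)
    (hcrit : ∀ i, pbar i + lbar * pderiv1 n f i xbar = 0)
    (hout : f xbar = ybar)
    (hF : (borderedHessian n f xbar).det ≠ 0)
    (V : Set ((Fin n → ℝ) × ℝ)) (W : Set (ℝ × (Fin n → ℝ)))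
    (φ : (Fin n → ℝ) × ℝ → ℝ × (Fin n → ℝ))
    (hV : IsOpen V)
    (hVmem : (pbar, ybar) ∈ V) (hWmem : (lbar, xbar) ∈ W)
    (hφ : ContDiffOn ℝ 1 φ V) (hmaps : Set.MapsTo φ V W)
    (huniq : ∀ p y, (p, y) ∈ V → ∀ l x, (l, x) ∈ W →
      (((∀ i, p i + l * pderiv1 n f i x = 0) ∧ f x = y) ↔ (l, x) = φ (p, y)))
    (C : (Fin n → ℝ) × ℝ → ℝ)
    (hC : ∀ z, C z = ∑ i, z.1 i * (φ z).2 i)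
    (i j : Fin n) :
    AES n f xbar i j =
      C (pbar, ybar) *
          fderiv ℝ (fun z => fderiv ℝ C z (Pi.single i 1, 0)) (pbar, ybar)
            (Pi.single j 1, 0) /
        (fderiv ℝ C (pbar, ybar) (Pi.single i 1, 0) *
          fderiv ℝ C (pbar, ybar) (Pi.single j 1, 0)) := by
  have hφ₀ : φ (pbar, ybar) = (lbar, xbar) :=
    ((huniq _ _ hVmem _ _ hWmem).mp ⟨hcrit, hout⟩).symm
  have hsys : ∀ w ∈ V,
      (∀ k, w.1 k + (φ w).1 * pderiv1 n f k (φ w).2 = 0) ∧ f (φ w).2 = w.2 :=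
    fun w hw => (huniq w.1 w.2 hw _ _ (hmaps hw)).mpr rfl
  have hsys₀ := eventually_of_mem (hV.mem_nhds hVmem) hsys
  have hφ₀diff : DifferentiableAt ℝ φ (pbar, ybar) :=
    (hφ.contDiffAt (hV.mem_nhds hVmem)).differentiableAt one_ne_zero
  have hshephard := eventually_fderiv_cost_apply_single hV hφ hsys hC hVmem (by rwa [hφ₀])
  have hlbar : lbar ≠ 0 := by
    rintro rfl
    exact (hppos i).ne' (by simpa using hcrit i)
  have hxij := fderiv_apply_eq_neg_cofactor_div (l := fun w => (φ w).1)
    (x := fun w => (φ w).2) hφ₀diff.fst hφ₀diff.snd (by simpa [hφ₀] using hC2.self_of_nhds)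
    (hsys₀.mono fun _ h => h.1) (hsys₀.mono fun _ h => h.2) (by simpa [hφ₀] using hlbar)
    (by simpa [hφ₀] using hF) i j
  have hCij : fderiv ℝ (fun z => fderiv ℝ C z (Pi.single i 1, 0)) (pbar, ybar)
      (Pi.single j 1, 0) = fderiv ℝ (fun w => (φ w).2) (pbar, ybar) (Pi.single j 1, 0) i := by
    rw [EventuallyEq.fderiv_eq (hshephard.mono fun w h => h i), fderiv_apply hφ₀diff.snd]
    rfl
  have hC₀ : C (pbar, ybar) = -lbar * ∑ k, xbar k * pderiv1 n f k xbar := by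
    rw [hC, hφ₀, Finset.mul_sum]
    exact Finset.sum_congr rfl fun k _ => by linear_combination xbar k * hcrit k
  rw [hshephard.self_of_nhds i, hshephard.self_of_nhds j, hCij, hxij, hC₀, hφ₀, AES]
  field_simp

/-- **Uzawa's form of the Allen elasticity of substitution.**
`σ^A_{ij}(x̄) = C(p̄,ȳ) C_{ij}(p̄,ȳ) / (C_i(p̄,ȳ) C_j(p̄,ȳ))`, provided
`C_i(p̄,ȳ)` and `C_j(p̄,ȳ)` are nonzero. -/
theorem AES_uzawa_form (n : ℕ) (f : (Fin n → ℝ) → ℝ)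
    (xbar pbar : Fin n → ℝ) (lbar ybar : ℝ)
    (hxpos : ∀ i, 0 < xbar i) (hppos : ∀ i, 0 < pbar i)
    (hC2 : ∀ᶠ z in nhds xbar, ContDiffAt ℝ 2 f z)
    (hcrit : ∀ i, pbar i + lbar * pderiv1 n f i xbar = 0)
    (hout : f xbar = ybar)
    (hF : (borderedHessian n f xbar).det ≠ 0)
    (V : Set ((Fin n → ℝ) × ℝ)) (W : Set (ℝ × (Fin n → ℝ)))
    (φ : (Fin n → ℝ) × ℝ → ℝ × (Fin n → ℝ))
    (hV : IsOpen V) (hW : IsOpen W)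
    (hVmem : (pbar, ybar) ∈ V) (hWmem : (lbar, xbar) ∈ W)
    (hφ : ContDiffOn ℝ 1 φ V) (hmaps : Set.MapsTo φ V W)
    (huniq : ∀ p y, (p, y) ∈ V → ∀ l x, (l, x) ∈ W →
      (((∀ i, p i + l * pderiv1 n f i x = 0) ∧ f x = y) ↔ (l, x) = φ (p, y)))
    (C : (Fin n → ℝ) × ℝ → ℝ)
    (hC : ∀ z, C z = ∑ i, z.1 i * (φ z).2 i)
    (i j : Fin n)
    (hCi : fderiv ℝ C (pbar, ybar) (Pi.single i 1, 0) ≠ 0)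
    (hCj : fderiv ℝ C (pbar, ybar) (Pi.single j 1, 0) ≠ 0) :
    AES n f xbar i j =
      C (pbar, ybar) *
          fderiv ℝ (fun z => fderiv ℝ C z (Pi.single i 1, 0)) (pbar, ybar)
            (Pi.single j 1, 0) /
        (fderiv ℝ C (pbar, ybar) (Pi.single i 1, 0) *
          fderiv ℝ C (pbar, ybar) (Pi.single j 1, 0)) :=
  AES_uzawa_form_general n f xbar pbar lbar ybar hppos hC2 hcrit hout hF V W φ hV hVmem hWmem hφ
    hmaps huniq C hC i j
end

section
/- Let C : ℝ²₊₊ → ℝ be a C² function that is positively homogeneous of degree 1 in p = (p₁, p₂) (C(t·p) = t·C(p) for all t > 0), and suppose C₁(p) ≠ 0 and C₂(p) ≠ 0 at a point p with positive coordinates. Then the two one-sided Morishima expressions coincide with the Uzawa form: p₁·(C₁₂/C₂ − C₁₁/C₁) = C·C₁₂/(C₁·C₂) = p₂·(C₁₂/C₁ − C₂₂/C₂), all derivatives evaluated at p. -/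
open Filter

open Topology

section Euler

variable {E F : Type*} [NormedAddCommGroup E] [NormedSpace ℝ E]
  [NormedAddCommGroup F] [NormedSpace ℝ F] {f : E → F} {x : E}

theorem fderiv_apply_self_of_homogeneous (hf : DifferentiableAt ℝ f x)
    (hhom : ∀ t : ℝ, 0 < t → f (t • x) = t • f x) : fderiv ℝ f x x = f x := by
  have hray : HasDerivAt (fun t : ℝ => f (t • x)) (fderiv ℝ f x x) 1 := by
    have hline : HasDerivAt (fun t : ℝ => t • x) x 1 := by
      simpa using (hasDerivAt_id (1 : ℝ)).smul_const x
    exact hf.hasFDerivAt.comp_hasDerivAt_of_eq 1 hline (one_smul ℝ x).symm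
  have hscale : HasDerivAt (fun t : ℝ => f (t • x)) (f x) 1 := by
    refine ((hasDerivAt_id (1 : ℝ)).smul_const (f x)).congr_of_eventuallyEq ?_ |>.congr_deriv
      (one_smul ℝ _)
    filter_upwards [Ioi_mem_nhds one_pos] with t ht using hhom t ht
  exact hray.unique hscale

theorem fderiv_fderiv_apply_self_eq_zero_of_homogeneous (hf : ContDiffAt ℝ 2 f x)
    (hhom : ∀ᶠ y in 𝓝 x, ∀ t : ℝ, 0 < t → f (t • y) = t • f y) (v : E) :
    fderiv ℝ (fderiv ℝ f) x v x = 0 := by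
  have heuler : (fun y => fderiv ℝ f y y) =ᶠ[𝓝 x] f := by
    filter_upwards [hhom, hf.eventually (by simp)] with y hy hfy using
      fderiv_apply_self_of_homogeneous (hfy.differentiableAt (by norm_num)) hy
  have hd2 : DifferentiableAt ℝ (fderiv ℝ f) x :=
    (hf.fderiv_right le_rfl).differentiableAt one_ne_zero
  -- differentiating `Df(y) y = f(y)` at `x` gives `Df(x) + D²f(x) (·) x = Df(x)`
  have hderiv := (hd2.hasFDerivAt.clm_apply (hasFDerivAt_id x)).congr_of_eventuallyEq
    heuler.symm |>.unique (hf.differentiableAt (by norm_num)).hasFDerivAt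
  simpa using congrArg (· v) hderiv

end Euler

section Coordinates

variable {n : ℕ} {f : (Fin n → ℝ) → ℝ} {x : Fin n → ℝ}

theorem ContinuousLinearMap.apply_eq_sum_mul_single (L : (Fin n → ℝ) →L[ℝ] ℝ) (x : Fin n → ℝ) :
    L x = ∑ j, x j * L (Pi.single j 1) := by
  conv_lhs => rw [← Finset.univ_sum_single x]
  simp only [map_sum]
  refine Finset.sum_congr rfl fun j _ => ?_
  rw [← smul_eq_mul, ← map_smul, ← Pi.single_smul, smul_eq_mul, mul_one]

theorem pderiv2_eq_fderiv_fderiv (hf : DifferentiableAt ℝ (fderiv ℝ f) x) (i j : Fin n) :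
    pderiv2 n f i j x = fderiv ℝ (fderiv ℝ f) x (Pi.single i 1) (Pi.single j 1) := by
  have happly : pderiv1 n f j =
      ContinuousLinearMap.apply ℝ ℝ (Pi.single j (1 : ℝ)) ∘ fderiv ℝ f := rfl
  rw [pderiv2, pderiv1, happly, fderiv_comp x (ContinuousLinearMap.differentiableAt _) hf,
    ContinuousLinearMap.fderiv]
  rfl

theorem pderiv2_comm (hf : ContDiffAt ℝ 2 f x) (i j : Fin n) :
    pderiv2 n f i j x = pderiv2 n f j i x := by
  have hd2 : DifferentiableAt ℝ (fderiv ℝ f) x :=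
    (hf.fderiv_right le_rfl).differentiableAt one_ne_zero
  rw [pderiv2_eq_fderiv_fderiv hd2, pderiv2_eq_fderiv_fderiv hd2,
    (hf.isSymmSndFDerivAt (by simp [minSmoothness_of_isRCLikeNormedField])).eq]

theorem sum_mul_pderiv1_of_homogeneous (hf : DifferentiableAt ℝ f x)
    (hhom : ∀ t : ℝ, 0 < t → f (t • x) = t • f x) :
    ∑ j, x j * pderiv1 n f j x = f x := by
  rw [← fderiv_apply_self_of_homogeneous hf hhom,
    ContinuousLinearMap.apply_eq_sum_mul_single (fderiv ℝ f x) x]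
  rfl

theorem sum_mul_pderiv2_of_homogeneous (hf : ContDiffAt ℝ 2 f x)
    (hhom : ∀ᶠ y in 𝓝 x, ∀ t : ℝ, 0 < t → f (t • y) = t • f y) (i : Fin n) :
    ∑ j, x j * pderiv2 n f i j x = 0 := by
  have hd2 : DifferentiableAt ℝ (fderiv ℝ f) x :=
    (hf.fderiv_right le_rfl).differentiableAt one_ne_zero
  simp_rw [pderiv2_eq_fderiv_fderiv hd2]
  rw [← ContinuousLinearMap.apply_eq_sum_mul_single,
    fderiv_fderiv_apply_self_eq_zero_of_homogeneous hf hhom]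

end Coordinates

/-- **for two factors both Morishima expressions equal the Uzawa form.**
For a `C²` cost function positively homogeneous of degree 1 in the two prices with
`C₁(p) ≠ 0` and `C₂(p) ≠ 0` at a positive price point `p`:
`p₁ (C₁₂/C₂ − C₁₁/C₁) = C C₁₂/(C₁ C₂) = p₂ (C₁₂/C₁ − C₂₂/C₂)`. -/
theorem morishima_eq_uzawa_two_factors (C : (Fin 2 → ℝ) → ℝ)
    (hC2 : ∀ p : Fin 2 → ℝ, (∀ i, 0 < p i) → ContDiffAt ℝ 2 C p)
    (hhom : ∀ t : ℝ, 0 < t → ∀ p : Fin 2 → ℝ, (∀ i, 0 < p i) → C (t • p) = t * C p)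
    (p : Fin 2 → ℝ) (hp : ∀ i, 0 < p i)
    (hC1 : pderiv1 2 C 0 p ≠ 0) (hC2' : pderiv1 2 C 1 p ≠ 0) :
    p 0 * (pderiv2 2 C 0 1 p / pderiv1 2 C 1 p - pderiv2 2 C 0 0 p / pderiv1 2 C 0 p) =
        C p * pderiv2 2 C 0 1 p / (pderiv1 2 C 0 p * pderiv1 2 C 1 p) ∧
      C p * pderiv2 2 C 0 1 p / (pderiv1 2 C 0 p * pderiv1 2 C 1 p) =
        p 1 * (pderiv2 2 C 0 1 p / pderiv1 2 C 0 p -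
          pderiv2 2 C 1 1 p / pderiv1 2 C 1 p) := by
  have hhom_near : ∀ᶠ q in 𝓝 p, ∀ t : ℝ, 0 < t → C (t • q) = t • C q := by
    have hpos : ∀ᶠ q in 𝓝 p, ∀ i, 0 < q i := eventually_all.2 fun i =>
      (continuous_apply i).continuousAt.eventually (lt_mem_nhds (hp i))
    filter_upwards [hpos] with q hq t ht using hhom t ht q hq
  have hC := hC2 p hp
  have euler := sum_mul_pderiv1_of_homogeneous (hC.differentiableAt two_ne_zero)
    hhom_near.self_of_nhds
  have euler₀ := sum_mul_pderiv2_of_homogeneous hC hhom_near 0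
  have euler₁ := sum_mul_pderiv2_of_homogeneous hC hhom_near 1
  simp only [Fin.sum_univ_two] at euler euler₀ euler₁
  rw [pderiv2_comm hC 1 0] at euler₁
  constructor
  · field_simp
    linear_combination pderiv2 2 C 0 1 p * euler - pderiv1 2 C 1 p * euler₀
  · field_simp
    linear_combination -(pderiv2 2 C 0 1 p * euler) + pderiv1 2 C 0 p * euler₁
end
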